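/- Consider the WVG v = [3n/2; 2n, 1, 1, ..., 1] with n players (one player of weight 2n and n−1 players of weight 1), where n is even. If player 1 splits into two players of weight n each, then in the resulting game v' on n+1 players, each split player has raw Banzhaf count 2^{n-1}, and each weight-1 player has raw Banzhaf count 2·C(n-2, (n-2)/2). -/

import Mathlib

open scoped Classical

section WVG

variable {α : Type*} [Fintype α] [DecidableEq α]

/-- A coalition `S` is winning in the WVG with quota `q` and weights `w`
iff its total weight is at least the quota. -/
def winning (q : ℕ) (w : α → ℕ) (S : Finset α) : Prop :=
  q ≤ ∑ j ∈ S, w j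

/-- `eta q w i` is the number of coalitions containing `i` that are winning
and become losing when `i` is removed (the raw Banzhaf count of `i`). -/
noncomputable def eta (q : ℕ) (w : α → ℕ) (i : α) : ℕ :=
  (Finset.univ.filter fun S : Finset α =>
    i ∈ S ∧ winning q w S ∧ ¬ winning q w (S.erase i)).card

/-- Total raw Banzhaf count over all players. -/
noncomputable def totalEta (q : ℕ) (w : α → ℕ) : ℕ :=
  ∑ i, eta q w i

/-- Banzhaf index of player `i`. -/
noncomputable def banzhaf (q : ℕ) (w : α → ℕ) (i : α) : ℚ :=
  (eta q w i : ℚ) / (totalEta q w : ℚ)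

/-- Shapley-Shubik index of player `i`. -/
noncomputable def shapley (q : ℕ) (w : α → ℕ) (i : α) : ℚ :=
  ∑ S ∈ (Finset.univ.filter fun S : Finset α =>
      i ∈ S ∧ winning q w S ∧ ¬ winning q w (S.erase i)),
    ((S.card - 1).factorial * (Fintype.card α - S.card).factorial : ℚ) /
      ((Fintype.card α).factorial : ℚ)

end WVG


/-!
Write `n = 2m`: the quota is `3m`, the two halves of the dictator weigh `2m`, and there are
`2m - 1` players of weight one. Player `i` is critical in `S ∋ i` iff `T = S \ {i}` is a swing
for `i`, i.e. `q - wᵢ ≤ w(T) < q`. If `i` is a half and `T` has `k` players of weight one, this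
reads `k < m` when `T` contains the other half and `m ≤ k` otherwise, so every set of weight-one
players extends to exactly one swing: `2^(2m-1)` swings. If `wᵢ = 1`, the swing must weigh
exactly `3m - 1`, which forces exactly one half and `m - 1` further weight-one players:
`2 · C(2m-2, m-1)` swings.
-/

open Finset

section Swings

variable {α : Type*} [Fintype α] [DecidableEq α]

theorem eta_eq_card_swings (q : ℕ) (w : α → ℕ) (i : α) :
    eta q w i = #((univ.erase i).powerset.filter
      fun T => ∑ j ∈ T, w j < q ∧ q ≤ ∑ j ∈ T, w j + w i) := by
  refine card_nbij' (fun S => S.erase i) (insert i) ?_ ?_ ?_ ?_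
  · intro S hS
    simp only [mem_coe, mem_filter, mem_univ, true_and, winning, not_le] at hS ⊢
    obtain ⟨hiS, hwin, hlose⟩ := hS
    refine ⟨mem_powerset.2 (erase_subset_erase i (subset_univ S)), hlose, ?_⟩
    rwa [sum_erase_add S w hiS]
  · intro T hT
    simp only [mem_coe, mem_filter, mem_powerset, mem_univ, true_and, winning, not_le] at hT ⊢
    obtain ⟨hT, hlose, hwin⟩ := hT
    have hiT : i ∉ T := fun h => notMem_erase i univ (hT h)
    rw [sum_insert hiT, erase_insert hiT]
    exact ⟨mem_insert_self i T, by omega, hlose⟩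
  · intro S hS
    exact insert_erase (mem_filter.1 hS).2.1
  · intro T hT
    exact erase_insert fun h => notMem_erase i univ (mem_powerset.1 (mem_filter.1 hT).1 h)

end Swings

theorem card_filter_powerset_insert {α : Type*} [DecidableEq α] {s : Finset α} {a : α}
    (ha : a ∉ s) (p : Finset α → Prop) [DecidablePred p] :
    #((insert a s).powerset.filter p) =
      #(s.powerset.filter p) + #(s.powerset.filter fun T => p (insert a T)) := by
  simp only [card_filter, sum_powerset_insert ha]

theorem card_filter_powerset_card_eq {α : Type*} (s : Finset α) (k : ℕ) :
    #(s.powerset.filter fun T => #T = k) = (#s).choose k := by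
  rw [← powersetCard_eq_filter, card_powersetCard]

def splitWeight (n : ℕ) (j : Fin (n + 1)) : ℕ := if (j : ℕ) < 2 then n else 1

def smallPlayers (n : ℕ) : Finset (Fin (n + 1)) := univ.filter fun j => 2 ≤ (j : ℕ)

section SplitGame

variable {n : ℕ}

theorem card_smallPlayers : #(smallPlayers n) = n - 1 := by
  have h := card_filter_add_card_filter_not (s := (univ : Finset (Fin (n + 1))))
    (p := fun j => (j : ℕ) < 2)
  simp only [Fin.card_filter_val_lt, card_univ, Fintype.card_fin, not_lt] at h
  rw [smallPlayers]
  omega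

@[simp]
theorem mem_smallPlayers {j : Fin (n + 1)} : j ∈ smallPlayers n ↔ 2 ≤ (j : ℕ) := by
  simp [smallPlayers]

theorem notMem_smallPlayers {b : Fin (n + 1)} (hb : (b : ℕ) < 2) : b ∉ smallPlayers n := by
  simpa using hb

theorem univ_eq_insert_insert_smallPlayers {b b' : Fin (n + 1)} (hb : (b : ℕ) < 2)
    (hb' : (b' : ℕ) < 2) (hne : b ≠ b') : univ = insert b (insert b' (smallPlayers n)) := by
  ext j
  simp only [mem_univ, mem_insert, mem_smallPlayers, true_iff, Fin.ext_iff]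
  omega

theorem sum_splitWeight_of_subset {T : Finset (Fin (n + 1))} (hT : T ⊆ smallPlayers n) :
    ∑ j ∈ T, splitWeight n j = #T := by
  rw [card_eq_sum_ones]
  refine sum_congr rfl fun j hj => ?_
  rw [splitWeight, if_neg (not_lt.2 (mem_smallPlayers.1 (hT hj)))]

theorem sum_splitWeight_insert {b : Fin (n + 1)} (hb : (b : ℕ) < 2) {T : Finset (Fin (n + 1))}
    (hbT : b ∉ T) : ∑ j ∈ insert b T, splitWeight n j = n + ∑ j ∈ T, splitWeight n j := by
  rw [sum_insert hbT, splitWeight, if_pos hb]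

end SplitGame

variable {m : ℕ}

theorem eta_splitWeight_of_lt_two (hm : 1 ≤ m) {b : Fin (2 * m + 1)} (hb : (b : ℕ) < 2) :
    eta (3 * m) (splitWeight (2 * m)) b = 2 ^ (2 * m - 1) := by
  set s := smallPlayers (2 * m)
  let b' : Fin (2 * m + 1) := ⟨1 - b, by omega⟩
  have hb' : (b' : ℕ) < 2 := by simp only [b']; omega
  have hne : b ≠ b' := Fin.ne_of_val_ne (by simp only [b']; omega)
  have hb's : b' ∉ s := notMem_smallPlayers hb'
  have herase : univ.erase b = insert b' s := by
    rw [univ_eq_insert_insert_smallPlayers hb hb' hne, erase_insert]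
    simpa [hne] using notMem_smallPlayers hb
  have hsum : ∀ T ∈ s.powerset, ∑ j ∈ T, splitWeight (2 * m) j = #T ∧ #T ≤ 2 * m - 1 :=
    fun T hT => ⟨sum_splitWeight_of_subset (mem_powerset.1 hT),
      card_smallPlayers (n := 2 * m) ▸ card_le_card (mem_powerset.1 hT)⟩
  rw [eta_eq_card_swings, herase, card_filter_powerset_insert hb's, splitWeight, if_pos hb]
  calc _ = #(s.powerset.filter fun T => m ≤ #T) + #(s.powerset.filter fun T => ¬ m ≤ #T) := by
        congr 1 <;> refine congrArg card (filter_congr fun T hT => ?_)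
        · rw [(hsum T hT).1]; have := (hsum T hT).2; omega
        · rw [sum_splitWeight_insert hb' fun h => hb's (mem_powerset.1 hT h), (hsum T hT).1]
          have := (hsum T hT).2; omega
    _ = 2 ^ (2 * m - 1) := by
        rw [card_filter_add_card_filter_not, card_powerset, card_smallPlayers]

theorem eta_splitWeight_of_two_le {i : Fin (2 * m + 1)} (hi : 2 ≤ (i : ℕ)) :
    eta (3 * m) (splitWeight (2 * m)) i = 2 * (2 * m - 2).choose (m - 1) := by
  let b₀ : Fin (2 * m + 1) := ⟨0, by omega⟩
  let b₁ : Fin (2 * m + 1) := ⟨1, by omega⟩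
  have hb₀ : (b₀ : ℕ) < 2 := Nat.zero_lt_two
  have hb₁ : (b₁ : ℕ) < 2 := Nat.one_lt_two
  have hcard : #((smallPlayers (2 * m)).erase i) = 2 * m - 2 := by
    rw [card_erase_of_mem (mem_smallPlayers.2 hi), card_smallPlayers]; omega
  set s := (smallPlayers (2 * m)).erase i
  have hss : s ⊆ smallPlayers (2 * m) := erase_subset i _
  have hb₁s : b₁ ∉ s := fun h => notMem_smallPlayers hb₁ (hss h)
  have hb₀s : b₀ ∉ insert b₁ s := by
    rw [mem_insert, not_or]
    exact ⟨by simp [b₀, b₁], fun h => notMem_smallPlayers hb₀ (hss h)⟩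
  have herase : univ.erase i = insert b₀ (insert b₁ s) := by
    rw [univ_eq_insert_insert_smallPlayers hb₀ hb₁ (by simp [b₀, b₁]),
      erase_insert_of_ne (by omega), erase_insert_of_ne (by omega)]
  have hsum : ∀ T ∈ s.powerset, ∑ j ∈ T, splitWeight (2 * m) j = #T ∧ #T ≤ 2 * m - 2 :=
    fun T hT => ⟨sum_splitWeight_of_subset ((mem_powerset.1 hT).trans hss),
      hcard ▸ card_le_card (mem_powerset.1 hT)⟩
  have hb₁T : ∀ T ∈ s.powerset, b₁ ∉ T := fun T hT h => hb₁s (mem_powerset.1 hT h)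
  have hb₀T : ∀ T ∈ s.powerset, b₀ ∉ insert b₁ T := fun T hT h =>
    hb₀s (insert_subset_insert b₁ (mem_powerset.1 hT) h)
  rw [eta_eq_card_swings, herase, card_filter_powerset_insert hb₀s,
    card_filter_powerset_insert hb₁s, card_filter_powerset_insert hb₁s, splitWeight,
    if_neg (by omega)]
  -- Swings containing neither half or both cannot weigh `3m - 1`.
  calc _ = 0 + (2 * m - 2).choose (m - 1) + ((2 * m - 2).choose (m - 1) + 0) := by
        rw [← hcard, ← card_filter_powerset_card_eq]
        congr 2
        · refine card_eq_zero.2 (filter_false_of_mem fun T hT => ?_)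
          rw [(hsum T hT).1]; have := (hsum T hT).2; omega
        · refine congrArg card (filter_congr fun T hT => ?_)
          rw [sum_splitWeight_insert hb₁ (hb₁T T hT), (hsum T hT).1]; omega
        · refine congrArg card (filter_congr fun T hT => ?_)
          rw [sum_splitWeight_insert hb₀ (fun h => hb₀T T hT (mem_insert_of_mem h)),
            (hsum T hT).1]
          omega
        · refine card_eq_zero.2 (filter_false_of_mem fun T hT => ?_)
          rw [sum_splitWeight_insert hb₀ (hb₀T T hT), sum_splitWeight_insert hb₁ (hb₁T T hT),
            (hsum T hT).1]
          omega
    _ = 2 * (2 * m - 2).choose (m - 1) := by ring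

/-- If in `[3n/2; 2n, 1, ..., 1]` (n players, n even) the dictator of weight
`2n` splits into two players of weight `n`, then in the resulting game on
`n+1` players each split player has raw Banzhaf count `2^(n-1)` and each
weight-1 player has raw Banzhaf count `2·C(n-2, (n-2)/2)`. -/
theorem dictator_split_counts (n : ℕ) (hn : Even n) (hn2 : 2 ≤ n)
    (w' : Fin (n + 1) → ℕ)
    (hw' : w' = fun j : Fin (n + 1) => if (j : ℕ) < 2 then n else 1) :
    (∀ j : Fin (n + 1), (j : ℕ) < 2 → eta (3 * n / 2) w' j = 2 ^ (n - 1)) ∧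
    (∀ j : Fin (n + 1), 2 ≤ (j : ℕ) →
      eta (3 * n / 2) w' j = 2 * (n - 2).choose ((n - 2) / 2)) := by
  obtain ⟨m, rfl⟩ := hn.two_dvd
  subst hw'
  rw [show 3 * (2 * m) / 2 = 3 * m by omega, show (2 * m - 2) / 2 = m - 1 by omega]
  exact ⟨fun j hj => eta_splitWeight_of_lt_two (by omega) hj,
    fun j hj => eta_splitWeight_of_two_le hj⟩
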